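/- arXiv:1203.0988 — 3 statements merged into one kernel-verified Lean document; each statement's English description precedes it below -/
import Mathlib

section
/- Let E be an n-perfect pseudo-effect algebra with n-decomposition (E₀,...,Eₙ). Then E₀ = Infinit(E) = Rad(E) = Rad_n(E), where Rad(E) is the intersection of all maximal ideals and Rad_n(E) is the intersection of all maximal normal ideals of E. -/
/-- A pseudo-effect algebra (PEA): a structure with a partial addition `add`
(with domain of definition `D`), a zero and a one, satisfying (PE1)-(PE4)
together with the (derivable) neutrality of zero. -/
structure PEA (E : Type) where
  /-- `D a b` means that the partial sum `a + b` is defined. -/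
  D : E → E → Prop
  /-- The partial addition (its value is relevant only when `D a b` holds). -/
  add : E → E → E
  zero : E
  one : E
  /-- (PE1), definedness part. -/
  assoc_defined : ∀ a b c, (D a b ∧ D (add a b) c) ↔ (D b c ∧ D a (add b c))
  /-- (PE1), equality part. -/
  assoc_eq : ∀ a b c, D a b → D (add a b) c → add (add a b) c = add a (add b c)
  /-- (PE2), right complement. -/
  compl_right : ∀ a, ∃! d, D a d ∧ add a d = one
  /-- (PE2), left complement. -/
  compl_left : ∀ a, ∃! e, D e a ∧ add e a = one
  /-- (PE3). -/
  pe3 : ∀ a b, D a b →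
    (∃ d, D d a ∧ add d a = add a b) ∧ (∃ e, D b e ∧ add b e = add a b)
  /-- (PE4). -/
  pe4_right : ∀ a, D a one → a = zero
  pe4_left : ∀ a, D one a → a = zero
  D_zero_right : ∀ a, D a zero
  D_zero_left : ∀ a, D zero a
  add_zero : ∀ a, add a zero = a
  zero_add : ∀ a, add zero a = a

namespace PEA

variable {E : Type} (P : PEA E)

/-- The induced partial order: `a ≤ b` iff `a + c = b` for some `c`. -/
def le (a b : E) : Prop := ∃ c, P.D a c ∧ P.add a c = b

/-- The left complement `a⁻`, the unique element with `a⁻ + a = 1`. -/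
noncomputable def lneg (a : E) : E := (P.compl_left a).choose

/-- The right complement `a~`, the unique element with `a + a~ = 1`. -/
noncomputable def rneg (a : E) : E := (P.compl_right a).choose

/-- `E` is weakly commutative if `a + b` is defined iff `b + a` is defined. -/
def WeaklyCommutative : Prop := ∀ a b, P.D a b ↔ P.D b a

/-- `E` is symmetric if the two complements coincide. -/
def Symmetric : Prop := ∀ a, P.lneg a = P.rneg a

/-- A state on a PEA: a `[0,1]`-valued map, additive on existing sums, sending
`0 ↦ 0` and `1 ↦ 1`. -/
def IsState (s : E → ℝ) : Prop :=
  s P.zero = 0 ∧ s P.one = 1 ∧ (∀ a, 0 ≤ s a ∧ s a ≤ 1) ∧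
    ∀ a b, P.D a b → s (P.add a b) = s a + s b

/-- An `(n+1)`-valued discrete state: a state whose range is `{0, 1/n, …, 1}`. -/
def IsDiscreteState (n : ℕ) (s : E → ℝ) : Prop :=
  P.IsState s ∧ Set.range s = {x : ℝ | ∃ i ≤ n, x = (i : ℝ) / n}

/-- An ideal: a nonempty downward closed subset closed under existing sums. -/
def IsIdeal (I : Set E) : Prop :=
  I.Nonempty ∧ (∀ a i, i ∈ I → P.le a i → a ∈ I) ∧
    ∀ i j, i ∈ I → j ∈ I → P.D i j → P.add i j ∈ I

/-- A normal ideal: `a + i = j + a` implies `i ∈ I ↔ j ∈ I`. -/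
def IsNormalIdeal (I : Set E) : Prop :=
  P.IsIdeal I ∧ ∀ a i j, P.D a i → P.D j a → P.add a i = P.add j a → (i ∈ I ↔ j ∈ I)

/-- A maximal ideal: proper and not properly contained in a proper ideal. -/
def IsMaximalIdeal (I : Set E) : Prop :=
  P.IsIdeal I ∧ P.one ∉ I ∧ ∀ J, P.IsIdeal J → P.one ∉ J → I ⊆ J → I = J

/-- `n`-fold partial multiple of an element. -/
def nmul : ℕ → E → E
  | 0, _ => P.zero
  | k + 1, a => P.add (nmul k a) a

/-- Definedness of the `n`-fold partial multiple. -/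
def nmulD : ℕ → E → Prop
  | 0, _ => True
  | k + 1, a => nmulD k a ∧ P.D (P.nmul k a) a

/-- The set of elements of infinite isotropic index. -/
def Infinit : Set E := {a | ∀ k, P.nmulD k a}

/-- An `n`-decomposition of a PEA. -/
def IsNDecomp (n : ℕ) (F : ℕ → Set E) : Prop :=
  (∀ i, i ≤ n → (F i).Nonempty) ∧
  (∀ i j, i ≤ n → j ≤ n → i ≠ j → F i ∩ F j = ∅) ∧
  ((⋃ i ∈ Set.Iic n, F i) = Set.univ) ∧
  (∀ i, i ≤ n → P.lneg '' F i = F (n - i) ∧ P.rneg '' F i = F (n - i)) ∧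
  (∀ i j, i ≤ n → j ≤ n → ∀ x ∈ F i, ∀ y ∈ F j, P.D x y →
     i + j ≤ n ∧ P.add x y ∈ F (i + j))

/-- An `n`-perfect PEA: an `n`-decomposition with all sums `Eᵢ + Eⱼ`, `i+j < n`,
existing, and whose bottom slice is the unique maximal ideal. -/
def IsNPerfect (n : ℕ) (F : ℕ → Set E) : Prop :=
  P.IsNDecomp n F ∧
  (∀ i j, i + j < n → ∀ x ∈ F i, ∀ y ∈ F j, P.D x y) ∧
  (P.IsMaximalIdeal (F 0) ∧ ∀ J, P.IsMaximalIdeal J → J = F 0)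

end PEA

/-! Every element of an `n`-decomposition has a level `k ≤ n`, and levels add along existing
sums. An element `a` of level `k > 0` can be added to itself at most `n / k` times, so
`Infinit(E) ⊆ E₀`; conversely `E₀ + E₀` always exists and stays in `E₀`, so `E₀ ⊆ Infinit(E)`.
Additivity of levels also makes `E₀` normal: from `a + i = j + a` the levels of `i` and `j`
agree. Since `E₀` is the only maximal ideal, both radicals are intersections of `{E₀}`. -/

namespace PEA

variable {E : Type} {P : PEA E} {n : ℕ} {F : ℕ → Set E}

namespace IsNDecomp

theorem exists_mem (hF : P.IsNDecomp n F) (x : E) : ∃ k ≤ n, x ∈ F k := by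
  have hx : x ∈ ⋃ i ∈ Set.Iic n, F i := hF.2.2.1 ▸ Set.mem_univ x
  simpa using hx

theorem eq_of_mem (hF : P.IsNDecomp n F) {i j : ℕ} {x : E} (hi : i ≤ n) (hj : j ≤ n)
    (hxi : x ∈ F i) (hxj : x ∈ F j) : i = j := by
  by_contra hij
  exact (hF.2.1 i j hi hj hij ▸ Set.mem_inter hxi hxj : x ∈ (∅ : Set E))

theorem add_mem (hF : P.IsNDecomp n F) {i j : ℕ} {x y : E} (hi : i ≤ n) (hj : j ≤ n)
    (hx : x ∈ F i) (hy : y ∈ F j) (hxy : P.D x y) : i + j ≤ n ∧ P.add x y ∈ F (i + j) :=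
  hF.2.2.2.2 i j hi hj x hx y hy hxy

/-- The level of `0` is `0`, because `0 + 0 = 0` has twice the level of `0`. -/
theorem zero_mem (hF : P.IsNDecomp n F) : P.zero ∈ F 0 := by
  obtain ⟨k, hk, hzero⟩ := hF.exists_mem P.zero
  have hsum := hF.add_mem hk hk hzero hzero (P.D_zero_left P.zero)
  rw [P.add_zero] at hsum
  obtain rfl : k = 0 := by have := hF.eq_of_mem hsum.1 hk hsum.2 hzero; omega
  exact hzero

theorem nmul_mem (hF : P.IsNDecomp n F) {a : E} {k : ℕ} (hk : k ≤ n) (ha : a ∈ F k) :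
    ∀ m, P.nmulD m a → m * k ≤ n ∧ P.nmul m a ∈ F (m * k)
  | 0, _ => ⟨by omega, by simpa [nmul] using hF.zero_mem⟩
  | m + 1, ⟨hm, hD⟩ => by
    obtain ⟨hmk, hmem⟩ := hF.nmul_mem hk ha m hm
    simpa [Nat.succ_mul, nmul] using hF.add_mem hmk hk hmem ha hD

theorem mem_zero_of_mem_infinit (hF : P.IsNDecomp n F) {a : E} (ha : a ∈ P.Infinit) :
    a ∈ F 0 := by
  obtain ⟨k, hk, hak⟩ := hF.exists_mem a
  obtain rfl | hk0 : k = 0 ∨ 0 < k := Nat.eq_zero_or_pos k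
  · exact hak
  · have hbound := (hF.nmul_mem hk hak (n + 1) (ha (n + 1))).1
    nlinarith

theorem isNormalIdeal_zero (hF : P.IsNDecomp n F) (hI : P.IsIdeal (F 0)) :
    P.IsNormalIdeal (F 0) := by
  refine ⟨hI, fun a i j hai hja heq => ?_⟩
  obtain ⟨p, hp, hap⟩ := hF.exists_mem a
  obtain ⟨q, hq, hiq⟩ := hF.exists_mem i
  obtain ⟨r, hr, hjr⟩ := hF.exists_mem j
  obtain ⟨hpq, hai_mem⟩ := hF.add_mem hp hq hap hiq hai
  obtain ⟨hrp, hja_mem⟩ := hF.add_mem hr hp hjr hap hja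
  obtain rfl : q = r := by
    have := hF.eq_of_mem hpq hrp hai_mem (heq ▸ hja_mem); omega
  exact ⟨fun hi => hF.eq_of_mem hq (Nat.zero_le n) hiq hi ▸ hjr,
    fun hj => hF.eq_of_mem hq (Nat.zero_le n) hjr hj ▸ hiq⟩

end IsNDecomp

namespace IsNPerfect

theorem nmul_mem_zero (hF : P.IsNPerfect n F) (hn : 1 ≤ n) {a : E} (ha : a ∈ F 0) :
    ∀ m, P.nmulD m a ∧ P.nmul m a ∈ F 0
  | 0 => ⟨trivial, hF.1.zero_mem⟩
  | m + 1 => by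
    obtain ⟨hm, hmem⟩ := hF.nmul_mem_zero hn ha m
    have hD : P.D (P.nmul m a) a := hF.2.1 0 0 hn _ hmem _ ha
    exact ⟨⟨hm, hD⟩, (hF.1.add_mem (Nat.zero_le n) (Nat.zero_le n) hmem ha hD).2⟩

theorem zero_eq_infinit (hF : P.IsNPerfect n F) (hn : 1 ≤ n) : F 0 = P.Infinit :=
  Set.Subset.antisymm (fun _ ha k => (hF.nmul_mem_zero hn ha k).1)
    fun _ => hF.1.mem_zero_of_mem_infinit

end IsNPerfect

end PEA

/-- in an `n`-perfect PEA, `E₀ = Infinit(E) = Rad(E) = Rad_n(E)`. -/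
theorem stmt10 {E : Type} (P : PEA E) (n : ℕ) (hn : 1 ≤ n) (F : ℕ → Set E)
    (hF : P.IsNPerfect n F) :
    F 0 = P.Infinit ∧
    F 0 = ⋂₀ {I : Set E | P.IsMaximalIdeal I} ∧
    F 0 = ⋂₀ {I : Set E | P.IsMaximalIdeal I ∧ P.IsNormalIdeal I} := by
  obtain ⟨hmax, huniq⟩ := hF.2.2
  have hnormal := hF.1.isNormalIdeal_zero hmax.1
  have hmaxSet : {I : Set E | P.IsMaximalIdeal I} = {F 0} :=
    Set.eq_singleton_iff_unique_mem.2 ⟨hmax, huniq⟩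
  have hnormalSet : {I : Set E | P.IsMaximalIdeal I ∧ P.IsNormalIdeal I} = {F 0} :=
    Set.eq_singleton_iff_unique_mem.2 ⟨⟨hmax, hnormal⟩, fun I hI => huniq I hI.1⟩
  refine ⟨hF.zero_eq_infinit hn, ?_, ?_⟩
  · rw [hmaxSet, Set.sInter_singleton]
  · rw [hnormalSet, Set.sInter_singleton]
end

section
/- Let E be an n-perfect pseudo-effect algebra in which each Eᵢ of its n-decomposition is both upwards and downwards directed, and suppose every decreasing chain in E₁ has a lower bound in E₁. Then there is a smallest element c ∈ E₁, nc = 1, each Eᵢ = {ic}, and E = {0, c, 2c, ..., nc}. -/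
/-! Proof idea: by Zorn's lemma and downward directedness, `E₁` has a least element `c`. For
`a ∈ E₀`, the element `x = (c⁻ + a)~` lies in `E₁` and satisfies `a + x = c`, so `x ≤ c`, hence
`x = c` and `a = 0` by cancellation; thus `E₀ = {0}`, and then `E₁ = {c}`. Inductively, if
`Eₖ = {kc}` with `1 ≤ k < n` and `x ∈ Eₖ₊₁`, then `(c + x~)⁻ ∈ Eₖ` must be `kc`, which unwinds to
`kc + c = x`; so `Eₖ₊₁ = {(k+1)c}`, and `1 ∈ Eₙ` gives `nc = 1`. -/

theorem exists_isLeast_of_directedOn_of_chains_bounded {α : Type*} [Preorder α] {s : Set α}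
    (hdir : DirectedOn (· ≥ ·) s)
    (hchain : ∀ C ⊆ s, IsChain (· ≤ ·) C → ∃ c ∈ s, ∀ x ∈ C, c ≤ x) :
    ∃ c, IsLeast s c := by
  obtain ⟨m, hms, hmin⟩ := zorn_le₀ (α := αᵒᵈ) s fun C hC hCchain => hchain C hC hCchain.symm
  refine ⟨m, hms, fun x hx => ?_⟩
  obtain ⟨z, hz, hzx, hzm⟩ := hdir x hx m hms
  exact le_trans (α := α) (hmin hz hzm) hzx

namespace PEA

variable {E : Type} (P : PEA E)

lemma D_rneg (a : E) : P.D a (P.rneg a) := (P.compl_right a).choose_spec.1.1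

lemma add_rneg (a : E) : P.add a (P.rneg a) = P.one := (P.compl_right a).choose_spec.1.2

lemma D_lneg (a : E) : P.D (P.lneg a) a := (P.compl_left a).choose_spec.1.1

lemma lneg_add (a : E) : P.add (P.lneg a) a = P.one := (P.compl_left a).choose_spec.1.2

lemma rneg_eq_of_add_eq_one {a d : E} (h : P.D a d) (had : P.add a d = P.one) :
    P.rneg a = d :=
  ((P.compl_right a).choose_spec.2 d ⟨h, had⟩).symm

lemma lneg_eq_of_add_eq_one {a e : E} (h : P.D e a) (hea : P.add e a = P.one) :
    P.lneg a = e :=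
  ((P.compl_left a).choose_spec.2 e ⟨h, hea⟩).symm

lemma rneg_lneg (a : E) : P.rneg (P.lneg a) = a :=
  P.rneg_eq_of_add_eq_one (P.D_lneg a) (P.lneg_add a)

lemma lneg_rneg (a : E) : P.lneg (P.rneg a) = a :=
  P.lneg_eq_of_add_eq_one (P.D_rneg a) (P.add_rneg a)

lemma rneg_zero : P.rneg P.zero = P.one :=
  P.rneg_eq_of_add_eq_one (P.D_zero_left _) (P.zero_add _)

lemma add_eq_rneg_of_add_add_eq_one {a b d : E} (hab : P.D a b) (h : P.D (P.add a b) d)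
    (h1 : P.add (P.add a b) d = P.one) : P.D b d ∧ P.add b d = P.rneg a := by
  obtain ⟨hbd, ha⟩ := (P.assoc_defined a b d).1 ⟨hab, h⟩
  exact ⟨hbd, (P.rneg_eq_of_add_eq_one ha (P.assoc_eq a b d hab h ▸ h1)).symm⟩

lemma add_eq_lneg_of_add_add_eq_one {a b d : E} (hbd : P.D b d) (h : P.D a (P.add b d))
    (h1 : P.add a (P.add b d) = P.one) : P.D a b ∧ P.add a b = P.lneg d := by
  obtain ⟨hab, hd⟩ := (P.assoc_defined a b d).2 ⟨hbd, h⟩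
  exact ⟨hab, (P.lneg_eq_of_add_eq_one hd (P.assoc_eq a b d hab hd ▸ h1)).symm⟩

lemma add_left_cancel {a b c : E} (hab : P.D a b) (hac : P.D a c)
    (h : P.add a b = P.add a c) : b = c := by
  -- with `d = (a + b)~`: `b + d = a~ = c + d`, hence `b~ = d + a~~ = c~`
  obtain ⟨hbd, hb⟩ := P.add_eq_rneg_of_add_add_eq_one hab (P.D_rneg _) (P.add_rneg _)
  obtain ⟨hcd, hc⟩ := P.add_eq_rneg_of_add_add_eq_one hac
    (by rw [← h]; exact P.D_rneg _) (by rw [← h]; exact P.add_rneg _)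
  obtain ⟨-, hb'⟩ := P.add_eq_rneg_of_add_add_eq_one hbd
    (by rw [hb]; exact P.D_rneg (P.rneg a)) (by rw [hb]; exact P.add_rneg _)
  obtain ⟨-, hc'⟩ := P.add_eq_rneg_of_add_add_eq_one hcd
    (by rw [hc]; exact P.D_rneg (P.rneg a)) (by rw [hc]; exact P.add_rneg _)
  rw [← P.lneg_rneg b, ← P.lneg_rneg c, ← hb', ← hc']

lemma add_right_cancel {a b c : E} (hba : P.D b a) (hca : P.D c a)
    (h : P.add b a = P.add c a) : b = c := by
  obtain ⟨hdb, hb⟩ := P.add_eq_lneg_of_add_add_eq_one hba (P.D_lneg _) (P.lneg_add _)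
  obtain ⟨hdc, hc⟩ := P.add_eq_lneg_of_add_add_eq_one hca
    (by rw [← h]; exact P.D_lneg _) (by rw [← h]; exact P.lneg_add _)
  obtain ⟨-, hb'⟩ := P.add_eq_lneg_of_add_add_eq_one hdb
    (by rw [hb]; exact P.D_lneg (P.lneg a)) (by rw [hb]; exact P.lneg_add _)
  obtain ⟨-, hc'⟩ := P.add_eq_lneg_of_add_add_eq_one hdc
    (by rw [hc]; exact P.D_lneg (P.lneg a)) (by rw [hc]; exact P.lneg_add _)
  rw [← P.rneg_lneg b, ← P.rneg_lneg c, ← hb', ← hc']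

lemma eq_zero_of_add_eq_zero {a b : E} (hab : P.D a b) (h : P.add a b = P.zero) :
    a = P.zero ∧ b = P.zero := by
  have hb : b = P.zero :=
    P.pe4_right b ((P.assoc_defined a b P.one).1 ⟨hab, h ▸ P.D_zero_left P.one⟩).1
  exact ⟨by rw [← h, hb, P.add_zero], hb⟩

lemma le_refl (a : E) : P.le a a := ⟨P.zero, P.D_zero_right a, P.add_zero a⟩

lemma le_trans {a b c : E} : P.le a b → P.le b c → P.le a c := by
  rintro ⟨u, hu, rfl⟩ ⟨v, hv, rfl⟩
  exact ⟨P.add u v, ((P.assoc_defined a u v).1 ⟨hu, hv⟩).2, (P.assoc_eq a u v hu hv).symm⟩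

lemma le_antisymm {a b : E} : P.le a b → P.le b a → a = b := by
  rintro ⟨u, hu, rfl⟩ ⟨v, hv, hba⟩
  have huv := (P.assoc_defined a u v).1 ⟨hu, hv⟩
  have h : P.add a (P.add u v) = P.add a P.zero := by
    rw [← P.assoc_eq a u v hu hv, hba, P.add_zero]
  have huv0 := P.add_left_cancel huv.2 (P.D_zero_right a) h
  rw [(P.eq_zero_of_add_eq_zero huv.1 huv0).1, P.add_zero]

lemma le_add_self {a b : E} (hab : P.D a b) : P.le b (P.add a b) := by
  obtain ⟨-, e, hbe, he⟩ := P.pe3 a b hab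
  exact ⟨e, hbe, he⟩

abbrev toPreorder : Preorder E where
  le := P.le
  le_refl := P.le_refl
  le_trans _ _ _ := P.le_trans

lemma exists_least_of_directed_of_chains_bounded {S : Set E}
    (hdir : ∀ x ∈ S, ∀ y ∈ S, ∃ z ∈ S, P.le z x ∧ P.le z y)
    (hchain : ∀ C ⊆ S, IsChain P.le C → ∃ c ∈ S, ∀ x ∈ C, P.le c x) :
    ∃ c ∈ S, ∀ x ∈ S, P.le c x :=
  letI := P.toPreorder
  let ⟨c, hc, hcS⟩ := exists_isLeast_of_directedOn_of_chains_bounded hdir hchain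
  ⟨c, hc, hcS⟩

variable {P} {n : ℕ} {F : ℕ → Set E}

lemma IsNDecomp.exists_mem_s12 (hF : P.IsNDecomp n F) (x : E) : ∃ i ≤ n, x ∈ F i := by
  have hx : x ∈ ⋃ i ∈ Set.Iic n, F i := hF.2.2.1 ▸ Set.mem_univ x
  simpa using hx

lemma IsNDecomp.eq_of_mem_s12 (hF : P.IsNDecomp n F) {i j : ℕ} {x : E} (hi : i ≤ n) (hj : j ≤ n)
    (hxi : x ∈ F i) (hxj : x ∈ F j) : i = j := by
  by_contra hij
  exact (hF.2.1 i j hi hj hij ▸ Set.mem_inter hxi hxj : x ∈ (∅ : Set E))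

lemma IsNDecomp.lneg_mem (hF : P.IsNDecomp n F) {i : ℕ} {x : E} (hi : i ≤ n) (hx : x ∈ F i) :
    P.lneg x ∈ F (n - i) :=
  (hF.2.2.2.1 i hi).1 ▸ Set.mem_image_of_mem _ hx

lemma IsNDecomp.rneg_mem (hF : P.IsNDecomp n F) {i : ℕ} {x : E} (hi : i ≤ n) (hx : x ∈ F i) :
    P.rneg x ∈ F (n - i) :=
  (hF.2.2.2.1 i hi).2 ▸ Set.mem_image_of_mem _ hx

lemma IsNDecomp.add_le (hF : P.IsNDecomp n F) {i j : ℕ} {x y : E} (hi : i ≤ n) (hj : j ≤ n)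
    (hx : x ∈ F i) (hy : y ∈ F j) (hxy : P.D x y) : i + j ≤ n :=
  (hF.2.2.2.2 i j hi hj x hx y hy hxy).1

lemma IsNDecomp.add_mem_s12 (hF : P.IsNDecomp n F) {i j : ℕ} {x y : E} (hi : i ≤ n) (hj : j ≤ n)
    (hx : x ∈ F i) (hy : y ∈ F j) (hxy : P.D x y) : P.add x y ∈ F (i + j) :=
  (hF.2.2.2.2 i j hi hj x hx y hy hxy).2

lemma IsNPerfect.zero_mem (hF : P.IsNPerfect n F) : P.zero ∈ F 0 :=
  let ⟨a, ha⟩ := hF.1.1 0 n.zero_le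
  hF.2.2.1.1.2.1 P.zero a ha ⟨a, P.D_zero_left a, P.zero_add a⟩

lemma IsNPerfect.one_mem (hF : P.IsNPerfect n F) : P.one ∈ F n := by
  simpa [P.rneg_zero] using hF.1.rneg_mem n.zero_le hF.zero_mem

lemma IsNPerfect.slice_zero_eq (hF : P.IsNPerfect n F) (hn : 1 ≤ n) {c : E} (hc : c ∈ F 1)
    (hleast : ∀ x ∈ F 1, P.le c x) : F 0 = {P.zero} := by
  refine Set.eq_singleton_iff_unique_mem.2 ⟨hF.zero_mem, fun a ha => ?_⟩
  have hlc : P.lneg c ∈ F (n - 1) := hF.1.lneg_mem hn hc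
  have hDa : P.D (P.lneg c) a := hF.2.1 (n - 1) 0 (by omega) _ hlc a ha
  have hx : P.rneg (P.add (P.lneg c) a) ∈ F 1 := by
    have := hF.1.rneg_mem (by omega) (hF.1.add_mem_s12 (by omega) n.zero_le hlc ha hDa)
    rwa [show n - (n - 1 + 0) = 1 by omega] at this
  obtain ⟨hax, hac⟩ := P.add_eq_rneg_of_add_add_eq_one hDa (P.D_rneg _) (P.add_rneg _)
  rw [P.rneg_lneg] at hac
  have hxc : P.rneg (P.add (P.lneg c) a) = c := by
    have hxle := P.le_add_self hax
    rw [hac] at hxle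
    exact P.le_antisymm hxle (hleast _ hx)
  rw [hxc] at hax hac
  exact P.add_right_cancel hax (P.D_zero_left c) (by rw [hac, P.zero_add])

lemma IsNPerfect.slice_one_eq (hF : P.IsNPerfect n F) (hn : 1 ≤ n) (hF0 : F 0 = {P.zero})
    {c : E} (hc : c ∈ F 1) (hleast : ∀ x ∈ F 1, P.le c x) : F 1 = {c} := by
  refine Set.eq_singleton_iff_unique_mem.2 ⟨hc, fun x hx => ?_⟩
  obtain ⟨d, hcd, rfl⟩ := hleast x hx
  obtain ⟨j, hj, hdj⟩ := hF.1.exists_mem_s12 d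
  have hj0 : 1 + j = 1 :=
    hF.1.eq_of_mem_s12 (hF.1.add_le hn hj hc hdj hcd) hn (hF.1.add_mem_s12 hn hj hc hdj hcd) hx
  obtain rfl : j = 0 := by omega
  rw [hF0, Set.mem_singleton_iff] at hdj
  rw [hdj, P.add_zero]

lemma IsNPerfect.add_eq_of_mem_succ (hF : P.IsNPerfect n F) {a c : E} (hc1 : F 1 = {c})
    {k : ℕ} (hk : 1 ≤ k) (hkn : k + 1 ≤ n) (hFk : F k = {a}) {x : E} (hx : x ∈ F (k + 1)) :
    P.D a c ∧ P.add a c = x := by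
  have hc : c ∈ F 1 := hc1 ▸ Set.mem_singleton c
  have hrx : P.rneg x ∈ F (n - (k + 1)) := hF.1.rneg_mem hkn hx
  have hD : P.D c (P.rneg x) := hF.2.1 1 _ (by omega) c hc _ hrx
  have hl : P.lneg (P.add c (P.rneg x)) = a := by
    have := hF.1.lneg_mem (by omega) (hF.1.add_mem_s12 (by omega) (by omega) hc hrx hD)
    rwa [show n - (1 + (n - (k + 1))) = k by omega, hFk] at this
  obtain ⟨hac, h⟩ := P.add_eq_lneg_of_add_add_eq_one (a := a) hD
    (by rw [← hl]; exact P.D_lneg _) (by rw [← hl]; exact P.lneg_add _)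
  exact ⟨hac, by rw [h, P.lneg_rneg]⟩

lemma IsNPerfect.slice_eq_nmul (hF : P.IsNPerfect n F) {c : E} (hc1 : F 1 = {c}) :
    ∀ i, 1 ≤ i → i ≤ n → P.nmulD i c ∧ F i = {P.nmul i c} := by
  refine Nat.le_induction ?_ fun k hk ih hkn => ?_
  · intro _
    exact ⟨⟨trivial, P.D_zero_left c⟩, by rw [hc1, nmul, nmul, P.zero_add]⟩
  obtain ⟨hDk, hFk⟩ := ih (by omega)
  have hsucc : ∀ x ∈ F (k + 1), P.D (P.nmul k c) c ∧ P.add (P.nmul k c) c = x :=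
    fun _ hx => hF.add_eq_of_mem_succ hc1 hk hkn hFk hx
  obtain ⟨y, hy⟩ := hF.1.1 (k + 1) hkn
  refine ⟨⟨hDk, (hsucc y hy).1⟩, Set.eq_singleton_iff_unique_mem.2 ⟨?_, ?_⟩⟩
  · rw [nmul, (hsucc y hy).2]; exact hy
  · exact fun x hx => (hsucc x hx).2.symm

end PEA

/-- if in an `n`-perfect PEA every slice is up- and downwards
directed and every decreasing chain in `E₁` has a lower bound in `E₁`, then `E₁`
has a smallest element `c`, `nc = 1`, `Eᵢ = {ic}` and `E = {0, c, …, nc}`. -/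
theorem stmt12 {E : Type} (P : PEA E) (n : ℕ) (hn : 1 ≤ n) (F : ℕ → Set E)
    (hF : P.IsNPerfect n F)
    (hdir : ∀ i ≤ n,
      (∀ x ∈ F i, ∀ y ∈ F i, ∃ z ∈ F i, P.le z x ∧ P.le z y) ∧
      (∀ x ∈ F i, ∀ y ∈ F i, ∃ z ∈ F i, P.le x z ∧ P.le y z))
    (hchain : ∀ C ⊆ F 1, IsChain P.le C → ∃ c ∈ F 1, ∀ x ∈ C, P.le c x) :
    ∃ c ∈ F 1, (∀ x ∈ F 1, P.le c x) ∧ P.nmulD n c ∧ P.nmul n c = P.one ∧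
      (∀ i ≤ n, F i = {P.nmul i c}) ∧
      (Set.univ : Set E) = {x : E | ∃ i ≤ n, x = P.nmul i c} := by
  obtain ⟨c, hc, hleast⟩ := P.exists_least_of_directed_of_chains_bounded (hdir 1 hn).1 hchain
  have hF0 := hF.slice_zero_eq hn hc hleast
  have hslice := hF.slice_eq_nmul (hF.slice_one_eq hn hF0 hc hleast)
  have hFi : ∀ i ≤ n, F i = {P.nmul i c} := by
    rintro (_ | i) hi
    exacts [hF0, (hslice (i + 1) (by omega) hi).2]
  refine ⟨c, hc, hleast, (hslice n hn le_rfl).1, ?_, hFi, ?_⟩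
  · exact (Set.mem_singleton_iff.1 (hFi n le_rfl ▸ hF.one_mem)).symm
  · refine Set.eq_univ_of_forall (fun x => ?_) |>.symm
    obtain ⟨i, hi, hx⟩ := hF.1.exists_mem_s12 x
    exact ⟨i, hi, Set.mem_singleton_iff.1 (hFi i hi ▸ hx)⟩
end

section
/- Let G be a directed partially ordered group and n ≥ 1, and let E = Γ(ℤ ⃗× G, (n,0)) be the interval pseudo-effect algebra in the lexicographic product ℤ ⃗× G with strong unit (n,0). Then E is an n-perfect pseudo-effect algebra, with n-decomposition E₀ = {(0,g) : g ∈ G⁺}, Eᵢ = {(i,g) : g ∈ G} for 1 ≤ i ≤ n−1, and Eₙ = {(n,−g) : g ∈ G⁺}. -/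
set_option linter.unusedSectionVars false
section IntervalPEA

variable {H : Type} [AddGroup H] [PartialOrder H]
  [CovariantClass H H (· + ·) (· ≤ ·)]
  [CovariantClass H H (Function.swap (· + ·)) (· ≤ ·)]

/-- The carrier of the interval `Γ(H, u) = [0, u]` in a po-group `H`. -/
def GammaSet (u : H) : Type := {x : H // 0 ≤ x ∧ x ≤ u}

namespace GammaInterval

variable (u : H) (hu : 0 ≤ u)

/-- Definedness of the partial addition of `Γ(H,u)`. -/
def gD (a b : GammaSet u) : Prop := a.1 + b.1 ≤ u

open Classical in
/-- The partial addition of `Γ(H,u)` (junk value `0` outside its domain). -/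
noncomputable def gadd (a b : GammaSet u) : GammaSet u :=
  if h : a.1 + b.1 ≤ u then ⟨a.1 + b.1, add_nonneg a.2.1 b.2.1, h⟩
  else ⟨0, le_refl 0, hu⟩

lemma gadd_val {a b : GammaSet u} (h : gD u a b) :
    (gadd u hu a b).1 = a.1 + b.1 := by
  have h' : a.1 + b.1 ≤ u := h
  simp only [gadd]
  first | rw [dif_pos h'] | simp [h']

/-- The interval `Γ(H, u)` as a pseudo-effect algebra. -/
noncomputable def Gamma : PEA (GammaSet u) where
  D := gD u
  add := gadd u hu
  zero := ⟨0, le_refl 0, hu⟩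
  one := ⟨u, hu, le_refl u⟩
  assoc_defined := by
    intro a b c
    constructor
    · rintro ⟨h1, h2⟩
      have h2a : (gadd u hu a b).1 + c.1 ≤ u := h2
      have h2' : a.1 + b.1 + c.1 ≤ u := by rwa [gadd_val u hu h1] at h2a
      have h3 : a.1 + (b.1 + c.1) ≤ u := by rwa [← add_assoc]
      have hbc : gD u b c := le_trans (le_add_of_nonneg_left a.2.1) h3
      refine ⟨hbc, ?_⟩
      show a.1 + (gadd u hu b c).1 ≤ u
      rwa [gadd_val u hu hbc]
    · rintro ⟨h1, h2⟩
      have h2a : a.1 + (gadd u hu b c).1 ≤ u := h2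
      have h2' : a.1 + (b.1 + c.1) ≤ u := by rwa [gadd_val u hu h1] at h2a
      have hab : gD u a b :=
        le_trans (add_le_add_right (le_add_of_nonneg_right c.2.1) a.1) h2'
      refine ⟨hab, ?_⟩
      show (gadd u hu a b).1 + c.1 ≤ u
      rw [gadd_val u hu hab, add_assoc]
      exact h2'
  assoc_eq := by
    intro a b c h1 h2
    have h2' : a.1 + b.1 + c.1 ≤ u := by
      have h2a : (gadd u hu a b).1 + c.1 ≤ u := h2
      rwa [gadd_val u hu h1] at h2a
    have h3 : a.1 + (b.1 + c.1) ≤ u := by rwa [← add_assoc]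
    have hbc : gD u b c := le_trans (le_add_of_nonneg_left a.2.1) h3
    have habc : gD u a (gadd u hu b c) := by
      show a.1 + (gadd u hu b c).1 ≤ u
      rwa [gadd_val u hu hbc]
    apply Subtype.ext
    rw [gadd_val u hu h2, gadd_val u hu h1, gadd_val u hu habc, gadd_val u hu hbc,
      add_assoc]
  compl_right := by
    intro a
    have h1 : (0 : H) ≤ -a.1 + u := by
      rw [le_neg_add_iff_add_le, add_zero]; exact a.2.2
    have h2 : -a.1 + u ≤ u := by
      simpa using add_le_add_right (neg_nonpos.mpr a.2.1) u
    have hD : gD u a ⟨-a.1 + u, h1, h2⟩ := by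
      show a.1 + (-a.1 + u) ≤ u
      rw [add_neg_cancel_left]
    refine ⟨⟨-a.1 + u, h1, h2⟩, ⟨hD, ?_⟩, ?_⟩
    · apply Subtype.ext
      rw [gadd_val u hu hD]
      exact add_neg_cancel_left a.1 u
    · rintro y ⟨hy1, hy2⟩
      apply Subtype.ext
      have hv := congrArg Subtype.val hy2
      rw [gadd_val u hu hy1] at hv
      show y.1 = -a.1 + u
      rw [eq_neg_add_iff_add_eq]
      exact hv
  compl_left := by
    intro a
    have h1 : (0 : H) ≤ u + -a.1 := by
      simpa using add_le_add_right a.2.2 (-a.1)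
    have h2 : u + -a.1 ≤ u := by
      simpa using add_le_add_left (neg_nonpos.mpr a.2.1) u
    have hD : gD u ⟨u + -a.1, h1, h2⟩ a := by
      show (u + -a.1) + a.1 ≤ u
      rw [neg_add_cancel_right]
    refine ⟨⟨u + -a.1, h1, h2⟩, ⟨hD, ?_⟩, ?_⟩
    · apply Subtype.ext
      rw [gadd_val u hu hD]
      exact neg_add_cancel_right u a.1
    · rintro y ⟨hy1, hy2⟩
      apply Subtype.ext
      have hv := congrArg Subtype.val hy2
      rw [gadd_val u hu hy1] at hv
      show y.1 = u + -a.1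
      rw [eq_add_neg_iff_add_eq]
      exact hv
  pe3 := by
    intro a b h
    constructor
    · have h1 : (0 : H) ≤ a.1 + b.1 + -a.1 := by
        have : a.1 + 0 + -a.1 ≤ a.1 + b.1 + -a.1 :=
          add_le_add_left (add_le_add_right b.2.1 a.1) (-a.1)
        simpa using this
      have h2 : a.1 + b.1 + -a.1 ≤ u := by
        calc a.1 + b.1 + -a.1 ≤ u + -a.1 := add_le_add_left h (-a.1)
          _ ≤ u + 0 := add_le_add_right (neg_nonpos.mpr a.2.1) u
          _ = u := add_zero u
      have hD : gD u ⟨a.1 + b.1 + -a.1, h1, h2⟩ a := by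
        show (a.1 + b.1 + -a.1) + a.1 ≤ u
        rw [neg_add_cancel_right]
        exact h
      refine ⟨⟨a.1 + b.1 + -a.1, h1, h2⟩, hD, ?_⟩
      apply Subtype.ext
      rw [gadd_val u hu hD, gadd_val u hu h]
      exact neg_add_cancel_right (a.1 + b.1) a.1
    · have h1 : (0 : H) ≤ -b.1 + (a.1 + b.1) := by
        have : -b.1 + b.1 ≤ -b.1 + (a.1 + b.1) :=
          add_le_add_right (le_add_of_nonneg_left a.2.1) (-b.1)
        simpa using this
      have h2 : -b.1 + (a.1 + b.1) ≤ u := by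
        calc -b.1 + (a.1 + b.1) ≤ -b.1 + u := add_le_add_right h (-b.1)
          _ ≤ 0 + u := add_le_add_left (neg_nonpos.mpr b.2.1) u
          _ = u := zero_add u
      have hD : gD u b ⟨-b.1 + (a.1 + b.1), h1, h2⟩ := by
        show b.1 + (-b.1 + (a.1 + b.1)) ≤ u
        rw [add_neg_cancel_left]
        exact h
      refine ⟨⟨-b.1 + (a.1 + b.1), h1, h2⟩, hD, ?_⟩
      apply Subtype.ext
      rw [gadd_val u hu hD, gadd_val u hu h]
      exact add_neg_cancel_left b.1 (a.1 + b.1)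
  pe4_right := by
    intro a h
    apply Subtype.ext
    have h' : a.1 + u ≤ u := h
    have h'' : a.1 + u + -u ≤ u + -u := add_le_add_left h' (-u)
    simp only [add_neg_cancel_right, add_neg_cancel] at h''
    exact le_antisymm h'' a.2.1
  pe4_left := by
    intro a h
    apply Subtype.ext
    have h' : u + a.1 ≤ u := h
    have h'' : -u + (u + a.1) ≤ -u + u := add_le_add_right h' (-u)
    simp only [neg_add_cancel_left, neg_add_cancel] at h''
    exact le_antisymm h'' a.2.1
  D_zero_right := by
    intro a
    show a.1 + 0 ≤ u
    simpa using a.2.2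
  D_zero_left := by
    intro a
    show 0 + a.1 ≤ u
    simpa using a.2.2
  add_zero := by
    intro a
    apply Subtype.ext
    have h : gD u a ⟨0, le_refl 0, hu⟩ := by
      show a.1 + 0 ≤ u; simpa using a.2.2
    rw [gadd_val u hu h]
    exact add_zero a.1
  zero_add := by
    intro a
    apply Subtype.ext
    have h : gD u ⟨0, le_refl 0, hu⟩ a := by
      show 0 + a.1 ≤ u; simpa using a.2.2
    rw [gadd_val u hu h]
    exact zero_add a.1

end GammaInterval

end IntervalPEA

section ZLexSection

/-- The lexicographic product `ℤ ⃗× G`. -/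
def ZLex (G : Type) : Type := ℤ × G

namespace ZLex

variable {G : Type} [AddGroup G] [PartialOrder G]
  [CovariantClass G G (· + ·) (· ≤ ·)]
  [CovariantClass G G (Function.swap (· + ·)) (· ≤ ·)]

instance : AddGroup (ZLex G) := inferInstanceAs (AddGroup (ℤ × G))

/-- Build an element of `ℤ ⃗× G`. -/
def mk (i : ℤ) (g : G) : ZLex G := ((i, g) : ℤ × G)

/-- First (integer) component. -/
def idx (x : ZLex G) : ℤ := (x : ℤ × G).1

/-- Second (group) component. -/
def snd (x : ZLex G) : G := (x : ℤ × G).2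

instance : PartialOrder (ZLex G) where
  le p q := idx p < idx q ∨ (idx p = idx q ∧ snd p ≤ snd q)
  le_refl p := Or.inr ⟨rfl, le_refl _⟩
  le_trans p q r := by
    rintro (h | ⟨e, h⟩) (h' | ⟨e', h'⟩)
    · exact Or.inl (lt_trans h h')
    · exact Or.inl (lt_of_lt_of_eq h e')
    · exact Or.inl (lt_of_eq_of_lt e h')
    · exact Or.inr ⟨e.trans e', le_trans h h'⟩
  le_antisymm p q := by
    rintro (h | ⟨e, h⟩) (h' | ⟨e', h'⟩)
    · exact absurd (lt_trans h h') (lt_irrefl _)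
    · exact absurd h (by rw [e']; exact lt_irrefl _)
    · exact absurd h' (by rw [e]; exact lt_irrefl _)
    · have h2 : snd p = snd q := le_antisymm h h'
      show ((idx p, snd p) : ℤ × G) = ((idx q, snd q) : ℤ × G)
      rw [e, h2]

lemma le_def (p q : ZLex G) :
    p ≤ q ↔ idx p < idx q ∨ (idx p = idx q ∧ snd p ≤ snd q) := Iff.rfl

lemma add_def (p q : ZLex G) :
    p + q = mk (idx p + idx q) (snd p + snd q) := rfl

instance : CovariantClass (ZLex G) (ZLex G) (· + ·) (· ≤ ·) := by
  constructor
  rintro c a b (h | ⟨e, h⟩)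
  · exact Or.inl (Int.add_lt_add_left h _)
  · exact Or.inr ⟨by show idx c + idx a = idx c + idx b; rw [e],
      add_le_add_right h _⟩

instance : CovariantClass (ZLex G) (ZLex G) (Function.swap (· + ·)) (· ≤ ·) := by
  constructor
  rintro c a b (h | ⟨e, h⟩)
  · exact Or.inl (Int.add_lt_add_right h _)
  · exact Or.inr ⟨by show idx a + idx c = idx b + idx c; rw [e],
      add_le_add_left h _⟩

end ZLex

end ZLexSection

/-!
In `Γ(ℤ ⃗× G, (n,0))` every element has first coordinate in `{0, …, n}`, and the slices `Eᵢ`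
by first coordinate behave like the integers `0, …, n`: both complements `x ↦ (n,0) - x` and
`x ↦ -x + (n,0)` send `Eᵢ` onto `E_{n-i}`, and partial sums add the indices. `E₀` is an ideal.
Conversely, an ideal `J` containing an element `(k,h)` with `k ≥ 1` contains `(1,h)` and every
`(0,c)` with `c ≥ 0`; since `G` is directed, some such `c` makes `(1,h) + (0,c) ≥ (1,0)`, so
`(1,0) ∈ J`, hence `(k,0) ∈ J` for all `1 ≤ k ≤ n` and in particular the unit `(n,0)`. So every proper ideal lies
in `E₀`, which is therefore the unique maximal ideal.
-/

namespace PEA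

variable {E : Type} (P : PEA E)

lemma lneg_spec (a : E) : P.D (P.lneg a) a ∧ P.add (P.lneg a) a = P.one :=
  (P.compl_left a).choose_spec.1

lemma rneg_spec (a : E) : P.D a (P.rneg a) ∧ P.add a (P.rneg a) = P.one :=
  (P.compl_right a).choose_spec.1

lemma image_lneg (S : Set E) : P.lneg '' S = P.rneg ⁻¹' S :=
  congrFun (Set.image_eq_preimage_of_inverse P.rneg_lneg P.lneg_rneg) S

lemma image_rneg (S : Set E) : P.rneg '' S = P.lneg ⁻¹' S :=
  congrFun (Set.image_eq_preimage_of_inverse P.lneg_rneg P.rneg_lneg) S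

lemma isMaximalIdeal_and_unique_of_forall_subset {I : Set E} (hI : P.IsIdeal I)
    (hI1 : P.one ∉ I) (hsub : ∀ J, P.IsIdeal J → P.one ∉ J → J ⊆ I) :
    P.IsMaximalIdeal I ∧ ∀ J, P.IsMaximalIdeal J → J = I :=
  ⟨⟨hI, hI1, fun J hJ hJ1 hIJ => hIJ.antisymm (hsub J hJ hJ1)⟩,
    fun J hJ => hJ.2.2 I hI hI1 (hsub J hJ.1 hJ.2.1)⟩

end PEA

namespace GammaInterval

variable {H : Type} [AddGroup H] [PartialOrder H]
  [CovariantClass H H (· + ·) (· ≤ ·)]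
  [CovariantClass H H (Function.swap (· + ·)) (· ≤ ·)]
  {u : H} (hu : 0 ≤ u)

lemma lneg_val (a : GammaSet u) : ((Gamma u hu).lneg a).1 = u + -a.1 := by
  obtain ⟨hD, hsum⟩ := (Gamma u hu).lneg_spec a
  exact eq_add_neg_of_add_eq ((gadd_val u hu hD).symm.trans (congrArg Subtype.val hsum))

lemma rneg_val (a : GammaSet u) : ((Gamma u hu).rneg a).1 = -a.1 + u := by
  obtain ⟨hD, hsum⟩ := (Gamma u hu).rneg_spec a
  exact eq_neg_add_of_add_eq ((gadd_val u hu hD).symm.trans (congrArg Subtype.val hsum))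

lemma le_iff (x y : GammaSet u) : (Gamma u hu).le x y ↔ x.1 ≤ y.1 := by
  constructor
  · rintro ⟨c, hD, rfl⟩
    show x.1 ≤ (gadd u hu x c).1
    rw [gadd_val u hu hD]
    exact le_add_of_nonneg_right c.2.1
  · intro hxy
    let c : GammaSet u := ⟨-x.1 + y.1, le_neg_add_iff_le.2 hxy,
      (add_le_of_nonpos_left (neg_nonpos.2 x.2.1)).trans y.2.2⟩
    have hxc : x.1 + c.1 = y.1 := add_neg_cancel_left x.1 y.1
    have hD : gD u x c := by
      show x.1 + c.1 ≤ u
      rw [hxc]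
      exact y.2.2
    exact ⟨c, hD, Subtype.ext ((gadd_val u hu hD).trans hxc)⟩

variable {J : Set (GammaSet u)}

lemma mem_image_val_of_le (hJ : (Gamma u hu).IsIdeal J) {x y : H}
    (hy : y ∈ Subtype.val '' J) (hx : 0 ≤ x) (hxy : x ≤ y) : x ∈ Subtype.val '' J := by
  obtain ⟨b, hb, rfl⟩ := hy
  exact ⟨⟨x, hx, hxy.trans b.2.2⟩, hJ.2.1 _ b hb ((le_iff hu _ _).2 hxy), rfl⟩

lemma add_mem_image_val (hJ : (Gamma u hu).IsIdeal J) {x y : H}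
    (hx : x ∈ Subtype.val '' J) (hy : y ∈ Subtype.val '' J) (hxy : x + y ≤ u) :
    x + y ∈ Subtype.val '' J := by
  obtain ⟨a, ha, rfl⟩ := hx
  obtain ⟨b, hb, rfl⟩ := hy
  exact ⟨_, hJ.2.2 a b ha hb hxy, gadd_val u hu hxy⟩

end GammaInterval

namespace ZLex

variable {G : Type}

lemma idx_mk (i : ℤ) (g : G) : idx (mk i g) = i := rfl

lemma mk_add_mk [AddGroup G] (i j : ℤ) (g h : G) : mk i g + mk j h = mk (i + j) (g + h) := rfl

lemma idx_add [AddGroup G] (p q : ZLex G) : idx (p + q) = idx p + idx q := rfl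

lemma idx_neg [AddGroup G] (p : ZLex G) : idx (-p) = -idx p := rfl

lemma idx_le_idx [PartialOrder G] {p q : ZLex G} (h : p ≤ q) : idx p ≤ idx q :=
  h.elim le_of_lt fun h => h.1.le

lemma mk_le_mk_of_le [PartialOrder G] {i j : ℤ} (g : G) (h : i ≤ j) : mk i g ≤ mk j g :=
  h.lt_or_eq.imp id fun e => ⟨e, le_rfl⟩

lemma exists_nonneg_mk_one_add_le [AddGroup G] [PartialOrder G]
    [CovariantClass G G (· + ·) (· ≤ ·)] (hdir : ∀ a b : G, ∃ c : G, a ≤ c ∧ b ≤ c)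
    {n : ℤ} {h : G} (hh : mk 1 h ≤ mk n 0) :
    ∃ c : G, 0 ≤ c ∧ 0 ≤ h + c ∧ mk 1 (h + c) ≤ mk n 0 := by
  rcases hh with hlt | ⟨heq, hle⟩
  · obtain ⟨c, hc, hc0⟩ := hdir (-h) 0
    exact ⟨c, hc0, neg_le_iff_add_nonneg'.1 hc, Or.inl hlt⟩
  · exact ⟨-h, neg_nonneg.2 hle, (add_neg_cancel h).ge, Or.inr ⟨heq, (add_neg_cancel h).le⟩⟩

section Slice

variable [AddGroup G] [PartialOrder G]

def slice (n i : ℕ) : Set (GammaSet (mk (n : ℤ) (0 : G))) := {x | idx x.1 = i}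

variable {n : ℕ}

lemma mem_slice {i : ℕ} {x : GammaSet (mk (n : ℤ) (0 : G))} : x ∈ slice n i ↔ idx x.1 = i :=
  Iff.rfl

lemma idx_val_nonneg (x : GammaSet (mk (n : ℤ) (0 : G))) : 0 ≤ idx x.1 :=
  idx_le_idx x.2.1

lemma idx_val_le (x : GammaSet (mk (n : ℤ) (0 : G))) : idx x.1 ≤ n :=
  idx_le_idx x.2.2

end Slice

section Gamma

open GammaInterval

variable [AddGroup G] [PartialOrder G]
  [CovariantClass G G (· + ·) (· ≤ ·)]
  [CovariantClass G G (Function.swap (· + ·)) (· ≤ ·)]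
  {n : ℕ}

variable (hu : (0 : ZLex G) ≤ mk n 0)

lemma idx_lneg (x : GammaSet (mk (n : ℤ) (0 : G))) :
    idx ((Gamma _ hu).lneg x).1 = n - idx x.1 := by
  rw [lneg_val, idx_add, idx_neg, sub_eq_add_neg]
  rfl

lemma idx_rneg (x : GammaSet (mk (n : ℤ) (0 : G))) :
    idx ((Gamma _ hu).rneg x).1 = n - idx x.1 := by
  rw [rneg_val, idx_add, idx_neg, neg_add_eq_sub]
  rfl

lemma image_lneg_slice {i : ℕ} (hi : i ≤ n) :
    (Gamma _ hu).lneg '' slice n i = slice n (n - i) := by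
  ext y
  rw [PEA.image_lneg, Set.mem_preimage, mem_slice, mem_slice, idx_rneg]
  omega

lemma image_rneg_slice {i : ℕ} (hi : i ≤ n) :
    (Gamma _ hu).rneg '' slice n i = slice n (n - i) := by
  ext y
  rw [PEA.image_rneg, Set.mem_preimage, mem_slice, mem_slice, idx_lneg]
  omega

lemma isNDecomp_slice : (Gamma _ hu).IsNDecomp n (slice n) := by
  refine ⟨fun i hi => ?_, fun i j _ _ hij => ?_, ?_, fun i hi =>
    ⟨image_lneg_slice hu hi, image_rneg_slice hu hi⟩, fun i j _ _ x hx y hy hxy => ?_⟩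
  · exact ⟨⟨mk i 0, mk_le_mk_of_le 0 (Nat.cast_nonneg i), mk_le_mk_of_le 0 (by exact_mod_cast hi)⟩,
      rfl⟩
  · refine Set.eq_empty_of_forall_notMem fun x ⟨hxi, hxj⟩ => hij ?_
    exact_mod_cast (hxi : idx x.1 = i).symm.trans hxj
  · refine Set.eq_univ_of_forall fun x => Set.mem_biUnion (x := (idx x.1).toNat) ?_ ?_
    · have := idx_val_le x
      rw [Set.mem_Iic]
      omega
    · have := idx_val_nonneg x
      rw [mem_slice]
      omega
  · have hidx : idx (x.1 + y.1) = (i + j : ℕ) := by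
      rw [idx_add, hx, hy, Nat.cast_add]
    have hle := idx_le_idx (show x.1 + y.1 ≤ mk n 0 from hxy)
    rw [hidx, idx_mk] at hle
    refine ⟨by exact_mod_cast hle, ?_⟩
    show idx (gadd _ hu x y).1 = (i + j : ℕ)
    rw [gadd_val _ hu hxy, hidx]

lemma D_of_mem_slice {i j : ℕ} (hij : i + j < n) {x y : GammaSet (mk (n : ℤ) (0 : G))}
    (hx : x ∈ slice n i) (hy : y ∈ slice n j) : (Gamma _ hu).D x y := by
  refine Or.inl ?_
  show idx x.1 + idx y.1 < n
  rw [hx, hy]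
  exact_mod_cast hij

lemma isIdeal_slice_zero : (Gamma _ hu).IsIdeal (slice n 0) := by
  refine ⟨⟨(Gamma _ hu).zero, rfl⟩, fun a i hi hai => ?_, fun i j hi hj hij => ?_⟩
  · have := idx_le_idx ((le_iff hu a i).1 hai)
    have := idx_val_nonneg a
    rw [mem_slice] at hi ⊢
    omega
  · show idx (gadd _ hu i j).1 = 0
    rw [gadd_val _ hu hij, idx_add, hi, hj]
    rfl

lemma one_mem_of_one_le_idx (hdir : ∀ a b : G, ∃ c : G, a ≤ c ∧ b ≤ c)
    {J : Set (GammaSet (mk (n : ℤ) (0 : G)))} (hJ : (Gamma _ hu).IsIdeal J)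
    {a : GammaSet (mk (n : ℤ) (0 : G))} (ha : a ∈ J) (ha1 : 1 ≤ idx a.1) :
    (Gamma _ hu).one ∈ J := by
  set S := Subtype.val '' J
  have hb : mk 1 (snd a.1) ≤ a.1 := mk_le_mk_of_le _ ha1
  have hbS : mk 1 (snd a.1) ∈ S :=
    mem_image_val_of_le hu hJ ⟨a, ha, rfl⟩ (Or.inl zero_lt_one) hb
  obtain ⟨c, hc, hac, hacU⟩ := exists_nonneg_mk_one_add_le hdir (hb.trans a.2.2)
  have hcS : mk 0 c ∈ S :=
    mem_image_val_of_le hu hJ hbS (Or.inr ⟨rfl, hc⟩) (Or.inl zero_lt_one)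
  have hunitS : mk 1 0 ∈ S :=
    mem_image_val_of_le hu hJ (add_mem_image_val hu hJ hbS hcS hacU) (Or.inl zero_lt_one)
      (Or.inr ⟨rfl, hac⟩)
  have hn : 1 ≤ n := by exact_mod_cast ha1.trans (idx_val_le a)
  have hkS : ∀ k, 1 ≤ k → k ≤ n → mk (k : ℤ) (0 : G) ∈ S := by
    intro k hk
    induction k, hk using Nat.le_induction with
    | base => exact fun _ => hunitS
    | succ k hk ih =>
      intro hkn
      have hsum_le : mk (k : ℤ) (0 : G) + mk 1 0 ≤ mk n 0 := by
        rw [mk_add_mk, add_zero]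
        exact mk_le_mk_of_le 0 (by exact_mod_cast hkn)
      have := add_mem_image_val hu hJ (ih (by omega)) hunitS hsum_le
      rwa [mk_add_mk, add_zero, ← Nat.cast_succ] at this
  obtain ⟨one, hone, hone_val⟩ := hkS n hn le_rfl
  exact (Subtype.ext hone_val : one = (Gamma _ hu).one) ▸ hone

lemma subset_slice_zero_of_one_notMem (hdir : ∀ a b : G, ∃ c : G, a ≤ c ∧ b ≤ c)
    {J : Set (GammaSet (mk (n : ℤ) (0 : G)))} (hJ : (Gamma _ hu).IsIdeal J)
    (hJ1 : (Gamma _ hu).one ∉ J) : J ⊆ slice n 0 := by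
  intro x hx
  by_contra hx0
  have := idx_val_nonneg x
  rw [mem_slice] at hx0
  exact hJ1 (one_mem_of_one_le_idx hu hdir hJ hx (by omega))

lemma one_notMem_slice_zero (hn : 1 ≤ n) : (Gamma _ hu).one ∉ slice n 0 := by
  intro h
  have : (n : ℤ) = 0 := h
  omega

theorem isNPerfect_slice (hdir : ∀ a b : G, ∃ c : G, a ≤ c ∧ b ≤ c) (hn : 1 ≤ n) :
    (Gamma _ hu).IsNPerfect n (slice n) :=
  ⟨isNDecomp_slice hu, fun _ _ hij _ hx _ hy => D_of_mem_slice hu hij hx hy,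
    (Gamma _ hu).isMaximalIdeal_and_unique_of_forall_subset (isIdeal_slice_zero hu)
      (one_notMem_slice_zero hu hn) fun _ hJ hJ1 => subset_slice_zero_of_one_notMem hu hdir hJ hJ1⟩

end Gamma

end ZLex

/-- for a directed po-group `G`, the interval PEA
`Γ(ℤ ⃗× G, (n,0))` is an `n`-perfect PEA, with `n`-decomposition given by the
slices of constant first coordinate. -/
theorem stmt15 (G : Type) [AddGroup G] [PartialOrder G]
    [CovariantClass G G (· + ·) (· ≤ ·)]
    [CovariantClass G G (Function.swap (· + ·)) (· ≤ ·)]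
    (hdir : ∀ a b : G, ∃ c : G, a ≤ c ∧ b ≤ c)
    (n : ℕ) (hn : 1 ≤ n)
    (P : PEA (GammaSet (ZLex.mk (n : ℤ) (0 : G))))
    (hP : P = GammaInterval.Gamma (ZLex.mk (n : ℤ) (0 : G)) (by exact Or.inl (show (0 : ℤ) < (n : ℤ) by exact_mod_cast hn))) :
    P.IsNPerfect n
      (fun i => {x : GammaSet (ZLex.mk (n : ℤ) (0 : G)) | ZLex.idx x.1 = (i : ℤ)}) :=
  hP ▸ ZLex.isNPerfect_slice _ hdir hn
end
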